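/- arXiv:2001.08110 — 4 statements merged into one kernel-verified Lean document; each statement's English description precedes it below -/
import Mathlib

section
/- With n₀, k₀, ω₀ ∈ (0,π), n, m, φ, k as defined (k = k₀ cos φ + m sin φ, m = (n₀+n)/(2cos(ω₀/2)), n = n₀ cos ω₀ + n₀ × k₀-term), define ω by sin(ω/2) = sin(ω₀/2)/√(1 − cos²(ω₀/2) sin²φ) with ω ∈ (0,π). Then sin ω = sin ω₀ cos φ / (1 − cos²(ω₀/2) sin²φ) and cos ω = (cos ω₀ − cos²(ω₀/2) sin²φ)/(1 − cos²(ω₀/2) sin²φ). -/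
open Matrix Real

/-- Levi-Civita tensor on `Fin 3`, with `eps 0 1 2 = 1`. -/
noncomputable def eps (i j l : Fin 3) : ℝ :=
  if (i = 0 ∧ j = 1 ∧ l = 2) ∨ (i = 1 ∧ j = 2 ∧ l = 0) ∨ (i = 2 ∧ j = 0 ∧ l = 1) then 1
  else if (i = 0 ∧ j = 2 ∧ l = 1) ∨ (i = 2 ∧ j = 1 ∧ l = 0) ∨ (i = 1 ∧ j = 0 ∧ l = 2) then -1
  else 0

/-- Rotation matrix `S_i{}^j = δ_i^j cos ω + k^l ε_{li}{}^j sin ω + k_i k^j (1 - cos ω)`. -/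
noncomputable def rot (ω : ℝ) (k : Fin 3 → ℝ) : Matrix (Fin 3) (Fin 3) ℝ :=
  Matrix.of fun i j : Fin 3 =>
    (if i = j then Real.cos ω else 0) + (∑ l, k l * eps l i j) * Real.sin ω
      + k i * k j * (1 - Real.cos ω)

/-!
Write `s₀ = sin (ω₀/2)`, `c₀ = cos (ω₀/2)` and `D = 1 - c₀² sin² φ = s₀² + (c₀ cos φ)²`.
The hypothesis says `sin (ω/2) = s₀ / √D`; since `ω/2` lies in `(0, π/2)` its cosine is the
nonnegative root `c₀ cos φ / √D`. So `ω/2` is the polar angle of the point `(c₀ cos φ, s₀)`, and the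
double-angle formulas give `sin ω = 2 s₀ c₀ cos φ / D = sin ω₀ cos φ / D` and
`cos ω = (c₀² cos² φ - s₀²) / D = (cos ω₀ - c₀² sin² φ) / D`.
-/

lemma one_sub_cos_sq_mul_sin_sq (a φ : ℝ) :
    1 - cos a ^ 2 * sin φ ^ 2 = sin a ^ 2 + (cos a * cos φ) ^ 2 := by
  linear_combination -sin_sq_add_cos_sq a - cos a ^ 2 * sin_sq_add_cos_sq φ

lemma cos_eq_div_sqrt_of_sin_eq_div_sqrt {x s c : ℝ} (hN : 0 < s ^ 2 + c ^ 2) (hc : 0 ≤ c)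
    (hx : 0 ≤ cos x) (h : sin x = s / √(s ^ 2 + c ^ 2)) : cos x = c / √(s ^ 2 + c ^ 2) := by
  refine (pow_left_inj₀ hx (by positivity) two_ne_zero).1 ?_
  rw [cos_sq', h, div_pow, div_pow, sq_sqrt hN.le]
  field_simp
  ring

lemma sin_cos_eq_of_half_eq_div_sqrt {x s c : ℝ} (hN : 0 < s ^ 2 + c ^ 2)
    (hs : sin (x / 2) = s / √(s ^ 2 + c ^ 2)) (hc : cos (x / 2) = c / √(s ^ 2 + c ^ 2)) :
    sin x = 2 * s * c / (s ^ 2 + c ^ 2) ∧ cos x = (c ^ 2 - s ^ 2) / (s ^ 2 + c ^ 2) := by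
  have hx : x = 2 * (x / 2) := by ring
  have hsq : √(s ^ 2 + c ^ 2) ^ 2 = s ^ 2 + c ^ 2 := sq_sqrt hN.le
  constructor
  · rw [hx, sin_two_mul, hs, hc]
    field_simp
    rw [hsq]
  · rw [hx, cos_two_mul', hs, hc, div_pow, div_pow, hsq]
    ring

theorem gauge_angle_trig (ω₀ φ ω : ℝ)
    (hω₀ : ω₀ ∈ Set.Ioo 0 Real.pi)
    (hφ : φ ∈ Set.Ioo (-(Real.pi / 2)) (Real.pi / 2))
    (hω : ω ∈ Set.Ioo 0 Real.pi)
    (hhalf : Real.sin (ω / 2) =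
      Real.sin (ω₀ / 2) / Real.sqrt (1 - Real.cos (ω₀ / 2) ^ 2 * Real.sin φ ^ 2)) :
    Real.sin ω = Real.sin ω₀ * Real.cos φ / (1 - Real.cos (ω₀ / 2) ^ 2 * Real.sin φ ^ 2) ∧
    Real.cos ω = (Real.cos ω₀ - Real.cos (ω₀ / 2) ^ 2 * Real.sin φ ^ 2) /
      (1 - Real.cos (ω₀ / 2) ^ 2 * Real.sin φ ^ 2) := by
  obtain ⟨hω₀_pos, hω₀_lt⟩ := hω₀
  obtain ⟨hω_pos, hω_lt⟩ := hω
  have hs₀ : 0 < sin (ω₀ / 2) := sin_pos_of_pos_of_lt_pi (by linarith) (by linarith)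
  have hc₀ : 0 < cos (ω₀ / 2) := cos_pos_of_mem_Ioo ⟨by linarith, by linarith⟩
  have hcφ : 0 < cos φ := cos_pos_of_mem_Ioo hφ
  have hcω : 0 < cos (ω / 2) := cos_pos_of_mem_Ioo ⟨by linarith, by linarith⟩
  rw [one_sub_cos_sq_mul_sin_sq] at hhalf ⊢
  have hN : 0 < sin (ω₀ / 2) ^ 2 + (cos (ω₀ / 2) * cos φ) ^ 2 := by positivity
  have hcos_half := cos_eq_div_sqrt_of_sin_eq_div_sqrt hN (by positivity) hcω.le hhalf
  obtain ⟨hsin, hcos⟩ := sin_cos_eq_of_half_eq_div_sqrt hN hhalf hcos_half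
  have hω₀_eq : ω₀ = 2 * (ω₀ / 2) := by ring
  rw [hsin, hcos, hω₀_eq, sin_two_mul, cos_two_mul', ← hω₀_eq]
  constructor
  · ring
  · linear_combination (cos (ω₀ / 2) ^ 2 * sin_sq_add_cos_sq φ) /
      (sin (ω₀ / 2) ^ 2 + (cos (ω₀ / 2) * cos φ) ^ 2)
end

section
/- Gauge invariance of the n-field: with n₀, k₀ unit vectors, (n₀,k₀) = 0, ω₀ ∈ (0,π), n^i = n₀^i cos ω₀ + n₀^j k₀^k ε_{kj}^i sin ω₀, m = (n₀+n)/(2cos(ω₀/2)), k = k₀ cos φ + m sin φ for φ ∈ (−π/2,π/2), and ω ∈ (0,π) defined by cos ω = (cos ω₀ − cos²(ω₀/2) sin²φ)/(1 − cos²(ω₀/2) sin²φ), sin ω = sin ω₀ cos φ/(1 − cos²(ω₀/2) sin²φ), one has n₀^j S_j^i(ω, k) = n^i; i.e., the rotated vector is independent of φ. -/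
/-
Rodrigues' formula turns `n₀ S(ω, k)` into `cos ω n₀ + sin ω (k × n₀) + (1 - cos ω)(k · n₀) k`.
With `w = k₀ × n₀` the axis is `k = cos φ k₀ + sin φ (cos(ω₀/2) n₀ + sin(ω₀/2) w)`, and since
`n₀ ⊥ k₀` we get `k · n₀ = sin φ cos(ω₀/2)` and `k × n₀ = cos φ w - sin φ sin(ω₀/2) k₀`.
Comparing the coefficients of `n₀`, `w`, `k₀` with `n = cos ω₀ n₀ + sin ω₀ w` leaves three
trigonometric identities, which follow from the formulas for `cos ω` and `sin ω` after writing
`ω₀ = 2 (ω₀/2)`.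
-/

open Matrix Real

theorem sum_mul_mul_eps (a b : Fin 3 → ℝ) (i : Fin 3) :
    ∑ j, ∑ l, a j * b l * eps l j i = (b ⨯₃ a) i := by
  fin_cases i <;> simp [Fin.sum_univ_three, eps, cross_apply] <;> ring

theorem vecMul_rot (ω : ℝ) (v k : Fin 3 → ℝ) :
    vecMul v (rot ω k) = cos ω • v + sin ω • (k ⨯₃ v) + ((1 - cos ω) * (k ⬝ᵥ v)) • k := by
  ext i
  fin_cases i <;>
    simp [vecMul, dotProduct, rot, Fin.sum_univ_three, eps, cross_apply, vecHead, vecTail] <;> ring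

theorem vecMul_rot_of_orthogonal {v u : Fin 3 → ℝ} (hv : v ⬝ᵥ v = 1) (hvu : v ⬝ᵥ u = 0)
    (ω a b d : ℝ) :
    vecMul v (rot ω (a • u + b • v + d • (u ⨯₃ v))) =
      (cos ω + (1 - cos ω) * b ^ 2) • v + (a * sin ω + (1 - cos ω) * b * d) • (u ⨯₃ v)
        + ((1 - cos ω) * a * b - d * sin ω) • u := by
  have hdot : (a • u + b • v + d • (u ⨯₃ v)) ⬝ᵥ v = b := by
    simp [dotProduct_comm _ v, hvu, hv]
  have hcross : (a • u + b • v + d • (u ⨯₃ v)) ⨯₃ v = a • (u ⨯₃ v) - d • u := by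
    simp [cross_self, cross_cross_eq_smul_sub_smul, hv, dotProduct_comm u v, hvu, sub_eq_add_neg]
  rw [vecMul_rot, hdot, hcross]
  module

theorem add_cos_mul_add_sin_mul_div_two_cos_half {α : ℝ} (hα : cos (α / 2) ≠ 0) (x y : ℝ) :
    (x + (cos α * x + sin α * y)) / (2 * cos (α / 2)) = cos (α / 2) * x + sin (α / 2) * y := by
  set θ := α / 2
  rw [show α = 2 * θ by ring, cos_two_mul, sin_two_mul]
  field_simp
  ring

theorem gaugeAngle_identities {α φ ω : ℝ}
    (hcos : cos ω = (cos α - cos (α / 2) ^ 2 * sin φ ^ 2) / (1 - cos (α / 2) ^ 2 * sin φ ^ 2))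
    (hsin : sin ω = sin α * cos φ / (1 - cos (α / 2) ^ 2 * sin φ ^ 2)) :
    cos ω + (1 - cos ω) * (sin φ * cos (α / 2)) ^ 2 = cos α ∧
      cos φ * sin ω + (1 - cos ω) * (sin φ * cos (α / 2)) * (sin φ * sin (α / 2)) = sin α ∧
      (1 - cos ω) * cos φ * (sin φ * cos (α / 2)) - sin φ * sin (α / 2) * sin ω = 0 := by
  -- a vanishing denominator would make both `cos ω` and `sin ω` equal to `x / 0 = 0`
  have hD : 1 - cos (α / 2) ^ 2 * sin φ ^ 2 ≠ 0 := by
    intro h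
    rw [h, div_zero] at hcos hsin
    simpa [hcos, hsin] using sin_sq_add_cos_sq ω
  rw [hcos, hsin]
  set θ := α / 2
  rw [show α = 2 * θ by ring, cos_two_mul, sin_two_mul] at *
  refine ⟨?_, ?_, ?_⟩ <;> field_simp
  · ring
  · linear_combination 2 * sin θ * cos θ * sin_sq_add_cos_sq φ
  · linear_combination -2 * cos θ * sin φ * cos φ * sin_sq_add_cos_sq θ

theorem gauge_invariance_of_n_general (n₀ k₀ : Fin 3 → ℝ)
    (hn₀ : ∑ i, n₀ i * n₀ i = 1)
    (horth : ∑ i, n₀ i * k₀ i = 0)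
    (ω₀ : ℝ) (hω₀ : ω₀ ∈ Set.Ioo 0 Real.pi)
    (φ : ℝ)
    (n : Fin 3 → ℝ)
    (hn : ∀ i, n i = n₀ i * Real.cos ω₀ + (∑ j, ∑ l, n₀ j * k₀ l * eps l j i) * Real.sin ω₀)
    (m : Fin 3 → ℝ) (hm : ∀ i, m i = (n₀ i + n i) / (2 * Real.cos (ω₀ / 2)))
    (k : Fin 3 → ℝ) (hk : ∀ i, k i = k₀ i * Real.cos φ + m i * Real.sin φ)
    (ω : ℝ)
    (hcosω : Real.cos ω = (Real.cos ω₀ - Real.cos (ω₀ / 2) ^ 2 * Real.sin φ ^ 2) /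
      (1 - Real.cos (ω₀ / 2) ^ 2 * Real.sin φ ^ 2))
    (hsinω : Real.sin ω = Real.sin ω₀ * Real.cos φ /
      (1 - Real.cos (ω₀ / 2) ^ 2 * Real.sin φ ^ 2)) :
    Matrix.vecMul n₀ (rot ω k) = n := by
  have hn' : n = cos ω₀ • n₀ + sin ω₀ • (k₀ ⨯₃ n₀) := by
    ext i
    simp only [hn, sum_mul_mul_eps, Pi.add_apply, Pi.smul_apply, smul_eq_mul]
    ring
  have hhalf : cos (ω₀ / 2) ≠ 0 :=
    (cos_pos_of_mem_Ioo ⟨by linarith [hω₀.1, pi_pos], by linarith [hω₀.2]⟩).ne'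
  have hk' : k = cos φ • k₀ + (sin φ * cos (ω₀ / 2)) • n₀
      + (sin φ * sin (ω₀ / 2)) • (k₀ ⨯₃ n₀) := by
    ext i
    simp only [hk, hm, hn', Pi.add_apply, Pi.smul_apply, smul_eq_mul,
      add_cos_mul_add_sin_mul_div_two_cos_half hhalf]
    ring
  obtain ⟨h_n₀, h_cross, h_k₀⟩ := gaugeAngle_identities hcosω hsinω
  rw [hk', vecMul_rot_of_orthogonal hn₀ horth, h_n₀, h_cross, h_k₀, zero_smul, add_zero, hn']

theorem gauge_invariance_of_n (n₀ k₀ : Fin 3 → ℝ)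
    (hn₀ : ∑ i, n₀ i * n₀ i = 1) (hk₀ : ∑ i, k₀ i * k₀ i = 1)
    (horth : ∑ i, n₀ i * k₀ i = 0)
    (ω₀ : ℝ) (hω₀ : ω₀ ∈ Set.Ioo 0 Real.pi)
    (φ : ℝ) (hφ : φ ∈ Set.Ioo (-(Real.pi / 2)) (Real.pi / 2))
    (n : Fin 3 → ℝ)
    (hn : ∀ i, n i = n₀ i * Real.cos ω₀ + (∑ j, ∑ l, n₀ j * k₀ l * eps l j i) * Real.sin ω₀)
    (m : Fin 3 → ℝ) (hm : ∀ i, m i = (n₀ i + n i) / (2 * Real.cos (ω₀ / 2)))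
    (k : Fin 3 → ℝ) (hk : ∀ i, k i = k₀ i * Real.cos φ + m i * Real.sin φ)
    (ω : ℝ) (hω : ω ∈ Set.Ioo 0 Real.pi)
    (hcosω : Real.cos ω = (Real.cos ω₀ - Real.cos (ω₀ / 2) ^ 2 * Real.sin φ ^ 2) /
      (1 - Real.cos (ω₀ / 2) ^ 2 * Real.sin φ ^ 2))
    (hsinω : Real.sin ω = Real.sin ω₀ * Real.cos φ /
      (1 - Real.cos (ω₀ / 2) ^ 2 * Real.sin φ ^ 2)) :
    Matrix.vecMul n₀ (rot ω k) = n :=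
  gauge_invariance_of_n_general n₀ k₀ hn₀ horth ω₀ hω₀ φ n hn m hm k hk ω hcosω hsinω
end

section
/- With n₀, k unit vectors in ℝ³, υ ∈ (0,π) defined by cos υ = (n₀,k), ω ∈ (0,π), and n = n₀ S(ω,k), one has sin ω₀ = 2 sin(ω/2) sin υ √(1 − sin²υ sin²(ω/2)), where ω₀ ∈ [0,π] is defined by cos ω₀ = (n₀, n). -/
open Matrix Real

theorem sin_omega_zero (n₀ k : Fin 3 → ℝ)
    (hn₀ : ∑ i, n₀ i * n₀ i = 1) (hk : ∑ i, k i * k i = 1)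
    (υ : ℝ) (hυ : υ ∈ Set.Ioo 0 Real.pi) (hcosυ : Real.cos υ = ∑ i, n₀ i * k i)
    (ω : ℝ) (hω : ω ∈ Set.Ioo 0 Real.pi)
    (ω₀ : ℝ) (hω₀ : ω₀ ∈ Set.Icc 0 Real.pi)
    (hω₀cos : Real.cos ω₀ = ∑ i, n₀ i * Matrix.vecMul n₀ (rot ω k) i) :
    Real.sin ω₀ = 2 * Real.sin (ω / 2) * Real.sin υ *
      Real.sqrt (1 - Real.sin υ ^ 2 * Real.sin (ω / 2) ^ 2) := by
  simp only [rot, vecMul, eps, Matrix.of_apply, dotProduct, Fin.sum_univ_three,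
    Fin.isValue, show ((0:Fin 3)=1) = False by decide, show ((0:Fin 3)=2) = False by decide,
    show ((1:Fin 3)=0) = False by decide, show ((1:Fin 3)=2) = False by decide,
    show ((2:Fin 3)=0) = False by decide, show ((2:Fin 3)=1) = False by decide,
    show ((0:Fin 3)=0) = True by decide, show ((1:Fin 3)=1) = True by decide,
    show ((2:Fin 3)=2) = True by decide, if_true, if_false, true_and, false_and, and_false,
    and_true, or_false, false_or, or_true, true_or] at hω₀cos
  simp only [Fin.sum_univ_three] at hcosυ hn₀
  have key : Real.cos ω₀ = Real.cos ω + (Real.cos υ)^2 * (1 - Real.cos ω) := by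
    rw [hω₀cos]
    linear_combination Real.cos ω * hn₀ -
      (1 - Real.cos ω) * (Real.cos υ + (n₀ 0 * k 0 + n₀ 1 * k 1 + n₀ 2 * k 2)) * hcosυ
  have hsυ : 0 ≤ Real.sin υ := Real.sin_nonneg_of_nonneg_of_le_pi hυ.1.le hυ.2.le
  have hsω : 0 ≤ Real.sin (ω/2) := Real.sin_nonneg_of_nonneg_of_le_pi (by linarith [hω.1])
    (by linarith [hω.2, Real.pi_pos])
  have hcosω : Real.cos ω = 1 - 2 * Real.sin (ω/2)^2 := by
    have h := Real.cos_two_mul (ω/2)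
    rw [show 2*(ω/2) = ω by ring] at h
    nlinarith [Real.sin_sq_add_cos_sq (ω/2)]
  have hcos0 : Real.cos ω₀ = 1 - 2 * (Real.sin υ * Real.sin (ω/2))^2 := by
    rw [key, hcosω]; nlinarith [Real.sin_sq_add_cos_sq υ]
  have hsin0 : Real.sin ω₀ = Real.sqrt (1 - Real.cos ω₀ ^ 2) :=
    Real.sin_eq_sqrt_one_sub_cos_sq hω₀.1 hω₀.2
  rw [hsin0, hcos0,
    show 1 - (1 - 2*(Real.sin υ * Real.sin (ω/2))^2)^2
      = (2*(Real.sin υ * Real.sin (ω/2)))^2 * (1 - Real.sin υ ^ 2 * Real.sin (ω/2)^2) by ring,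
    Real.sqrt_mul (sq_nonneg _), Real.sqrt_sq (by positivity)]
  ring
end

section
/- With k₀ as in the recovery formula k₀^i = [k^i cos(ω/2) − (n₀^i cos(ω/2) + n₀^j k^l ε_{lj}^i sin(ω/2)) cos υ]/(sin υ √(1 − sin²υ sin²(ω/2))), and ω₀ defined by cos ω₀ = 1 − 2 sin²(ω/2) sin²υ, sin ω₀ = 2 sin(ω/2) sin υ √(1 − sin²υ sin²(ω/2)), ω₀ ∈ [0,π], one has n₀^j S_j^i(ω₀, k₀) = n₀^j S_j^i(ω, k); i.e., the minimal rotation about k₀ and the rotation about k produce the same image of n₀. -/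
open Matrix Real

set_option maxHeartbeats 1000000 in
theorem minimal_rotation_same_image (n₀ k : Fin 3 → ℝ)
    (hn₀ : ∑ i, n₀ i * n₀ i = 1) (hk : ∑ i, k i * k i = 1)
    (υ : ℝ) (hυ : υ ∈ Set.Ioo 0 Real.pi) (hcosυ : Real.cos υ = ∑ i, n₀ i * k i)
    (ω : ℝ) (hω : ω ∈ Set.Ioo 0 Real.pi)
    (k₀ : Fin 3 → ℝ)
    (hk₀ : ∀ i, k₀ i = (k i * Real.cos (ω / 2) -
        (n₀ i * Real.cos (ω / 2) + (∑ j, ∑ l, n₀ j * k l * eps l j i) * Real.sin (ω / 2)) *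
          Real.cos υ) /
      (Real.sin υ * Real.sqrt (1 - Real.sin υ ^ 2 * Real.sin (ω / 2) ^ 2)))
    (ω₀ : ℝ) (hω₀ : ω₀ ∈ Set.Icc 0 Real.pi)
    (hcosω₀ : Real.cos ω₀ = 1 - 2 * Real.sin (ω / 2) ^ 2 * Real.sin υ ^ 2)
    (hsinω₀ : Real.sin ω₀ = 2 * Real.sin (ω / 2) * Real.sin υ *
      Real.sqrt (1 - Real.sin υ ^ 2 * Real.sin (ω / 2) ^ 2)) :
    Matrix.vecMul n₀ (rot ω₀ k₀) = Matrix.vecMul n₀ (rot ω k) := by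
  obtain ⟨hυ0, hυπ⟩ := hυ
  obtain ⟨hω0, hωπ⟩ := hω
  have hs : 0 < Real.sin υ := Real.sin_pos_of_pos_of_lt_pi hυ0 hυπ
  have hs1 : Real.sin υ ≤ 1 := Real.sin_le_one υ
  have hch : 0 < Real.cos (ω/2) := Real.cos_pos_of_mem_Ioo
    ⟨by linarith [Real.pi_pos], by linarith⟩
  have hph : Real.sin (ω/2)^2 + Real.cos (ω/2)^2 = 1 := Real.sin_sq_add_cos_sq _
  have hpu : Real.sin υ^2 + Real.cos υ^2 = 1 := Real.sin_sq_add_cos_sq _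
  have hshpos : 0 < Real.sin (ω/2) :=
    Real.sin_pos_of_pos_of_lt_pi (by linarith) (by linarith [Real.pi_pos])
  have hD2pos : 0 < 1 - Real.sin υ ^ 2 * Real.sin (ω / 2) ^ 2 := by nlinarith
  set D := Real.sqrt (1 - Real.sin υ ^ 2 * Real.sin (ω / 2) ^ 2) with hDdef
  have hD : 0 < D := Real.sqrt_pos.mpr hD2pos
  have hD2 : D^2 = 1 - Real.sin υ ^ 2 * Real.sin (ω / 2) ^ 2 := Real.sq_sqrt hD2pos.le
  have hcos : Real.cos ω = 1 - 2 * Real.sin (ω/2)^2 := by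
    have h := Real.cos_two_mul (ω/2)
    rw [show 2*(ω/2) = ω by ring] at h
    nlinarith
  have hsin : Real.sin ω = 2 * Real.sin (ω/2) * Real.cos (ω/2) := by
    have h := Real.sin_two_mul (ω/2)
    rw [show 2*(ω/2) = ω by ring] at h
    linarith
  simp only [Fin.sum_univ_three] at hn₀ hk hcosυ
  have hsD : Real.sin υ * D ≠ 0 := by positivity
  -- cross product w = k × n₀
  have hq : ∀ i : Fin 3, k₀ i * (Real.sin υ * D) = k i * Real.cos (ω/2) -
      (n₀ i * Real.cos (ω/2) + (∑ j, ∑ l, n₀ j * k l * eps l j i) * Real.sin (ω/2)) *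
        Real.cos υ := by
    intro i
    rw [hk₀ i]
    field_simp
  have hq0 := hq 0
  have hq1 := hq 1
  have hq2 := hq 2
  simp only [Fin.sum_univ_three] at hq0 hq1 hq2
  norm_num [eps, Fin.ext_iff] at hq0 hq1 hq2
  have hdotD : (n₀ 0 * k₀ 0 + n₀ 1 * k₀ 1 + n₀ 2 * k₀ 2) * (Real.sin υ * D) = 0 := by
    linear_combination n₀ 0 * hq0 + n₀ 1 * hq1 + n₀ 2 * hq2 - Real.cos (ω/2) * hcosυ -
      Real.cos υ * Real.cos (ω/2) * hn₀
  have hdot : n₀ 0 * k₀ 0 + n₀ 1 * k₀ 1 + n₀ 2 * k₀ 2 = 0 := by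
    rcases mul_eq_zero.mp hdotD with h | h
    · exact h
    · exact absurd h hsD
  funext j
  fin_cases j <;>
    simp only [Matrix.vecMul, dotProduct, rot, Matrix.of_apply, Fin.sum_univ_three,
      hcosω₀, hsinω₀, hcos, hsin, ← hDdef] <;>
    norm_num [eps, Fin.ext_iff, show (⟨0, by omega⟩ : Fin 3) = 0 from rfl,
      show (⟨1, by omega⟩ : Fin 3) = 1 from rfl, show (⟨2, by omega⟩ : Fin 3) = 2 from rfl]
  · linear_combination (2*Real.sin (ω/2)^2*Real.sin υ^2*k₀ 0) * hdot +
      (2*Real.sin (ω/2)*n₀ 2) * hq1 - (2*Real.sin (ω/2)*n₀ 1) * hq2 +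
      (2*Real.sin (ω/2)^2*Real.cos υ*n₀ 0 + 2*Real.sin (ω/2)^2*k 0) * hcosυ +
      (2*Real.cos υ*Real.sin (ω/2)^2*k 0) * hn₀ - (2*Real.sin (ω/2)^2*n₀ 0) * hpu
  · linear_combination (2*Real.sin (ω/2)^2*Real.sin υ^2*k₀ 1) * hdot +
      (2*Real.sin (ω/2)*n₀ 0) * hq2 - (2*Real.sin (ω/2)*n₀ 2) * hq0 +
      (2*Real.sin (ω/2)^2*Real.cos υ*n₀ 1 + 2*Real.sin (ω/2)^2*k 1) * hcosυ +
      (2*Real.cos υ*Real.sin (ω/2)^2*k 1) * hn₀ - (2*Real.sin (ω/2)^2*n₀ 1) * hpu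
  · linear_combination (2*Real.sin (ω/2)^2*Real.sin υ^2*k₀ 2) * hdot +
      (2*Real.sin (ω/2)*n₀ 1) * hq0 - (2*Real.sin (ω/2)*n₀ 0) * hq1 +
      (2*Real.sin (ω/2)^2*Real.cos υ*n₀ 2 + 2*Real.sin (ω/2)^2*k 2) * hcosυ +
      (2*Real.cos υ*Real.sin (ω/2)^2*k 2) * hn₀ - (2*Real.sin (ω/2)^2*n₀ 2) * hpu
end
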